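/- Let N ≥ 1 be an integer, let F : ℂ^N → ℂ^N be quadratic, i.e. F(z) = B(z,z) + A(z) for a symmetric bilinear map B : ℂ^N × ℂ^N → ℂ^N and a linear map A : ℂ^N → ℂ^N, and let R > 0. Then there exists C₁ > 0, depending only on N, R and the operator norms of A and B, such that for every λ ≥ 1, every α ∈ [0,1], and all twice continuously differentiable y, h : [0,1] → ℂ^N with ‖y‖_{H²} ≤ R and ‖h‖_{H²} ≤ R, one has |J_{λ,α}(y + h) − J_{λ,α}(y) − L_{λ,α,y}(h)| ≤ C₁ e^{2λ} ‖h‖_{H²}². (Quantitative Fréchet differentiability of J_{λ,α}, established in the proof of Theorem 4.1.) -/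

import Mathlib

/-!
Put `u = y'' + F(y')`, `v = h'' + 2B(y',h') + A(h')` and `w = B(h',h')`. Since `B` is symmetric,
`(y+h)'' + F((y+h)') = u + v + w`, while the integrand of `L` is `2 Re⟨v, u⟩ e^{-2λx}`. Hence
`J(y+h) - J(y) - L(h) = e^{2λ} ∫₀¹ (|v + w|² + 2 Re⟨w, u⟩) e^{-2λx} dx + α‖h‖²_{H²}`:
only terms at least quadratic in `h` survive. The one-dimensional Sobolev embedding
`|g(x)|² ≤ 2 ∫₀¹ (|g|² + |g'|²)` bounds `|y'|` and `|h'|` pointwise by `√2 R` and `√2 ‖h‖_{H²}`,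
so the integrand is at most `C (|h''|² + |h'|² (1 + |y''|²))`, whose integral is at most
`C (1 + 2R²) ‖h‖²_{H²}`; the weight `e^{-2λx}` is at most `1` on `[0,1]` and `α ≤ 1 ≤ e^{2λ}`.
-/

open MeasureTheory

/-- The `H²(0,1)` norm of a function `g : [0,1] → ℂ^N`:
`‖g‖_{H²}² = ∫₀¹ (|g|² + |g'|² + |g''|²) dx`. -/
noncomputable def H2norm {N : ℕ} (g : ℝ → EuclideanSpace ℂ (Fin N)) : ℝ :=
  Real.sqrt (∫ x in (0:ℝ)..1,
    (‖g x‖ ^ 2 + ‖deriv g x‖ ^ 2 + ‖deriv (deriv g) x‖ ^ 2))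

/-- The real `H²(0,1)` inner product
`⟨g,h⟩_{H²} = ∫₀¹ Re(⟨g,h⟩ + ⟨g',h'⟩ + ⟨g'',h''⟩) dx`. -/
noncomputable def H2inner {N : ℕ} (g h : ℝ → EuclideanSpace ℂ (Fin N)) : ℝ :=
  ∫ x in (0:ℝ)..1,
    (((inner ℂ (g x) (h x) : ℂ)).re + ((inner ℂ (deriv g x) (deriv h x) : ℂ)).re
      + ((inner ℂ (deriv (deriv g) x) (deriv (deriv h) x) : ℂ)).re)

/-- The weighted Tikhonov-like functional
`J_{λ,α}(y) = e^{2λ} ∫₀¹ |y'' + F(y')|² e^{-2λx} dx + α‖y‖_{H²}²`. -/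
noncomputable def Jfun {N : ℕ}
    (F : EuclideanSpace ℂ (Fin N) → EuclideanSpace ℂ (Fin N))
    (lam α : ℝ) (y : ℝ → EuclideanSpace ℂ (Fin N)) : ℝ :=
  Real.exp (2 * lam) *
      (∫ x in (0:ℝ)..1, ‖deriv (deriv y) x + F (deriv y x)‖ ^ 2 * Real.exp (-2 * lam * x))
    + α * (H2norm y) ^ 2

/-- The linearization (Fréchet derivative) of `J_{λ,α}` at `y` applied to `h`, where
`F(z) = B(z,z) + A(z)`:
`L_{λ,α,y}(h) = e^{2λ} ∫₀¹ 2Re⟨h'' + 2B(y',h') + A(h'), y'' + F(y')⟩ e^{-2λx} dx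
  + 2α⟨y,h⟩_{H²}`. -/
noncomputable def Lfun {N : ℕ}
    (B : EuclideanSpace ℂ (Fin N) →L[ℂ] EuclideanSpace ℂ (Fin N) →L[ℂ] EuclideanSpace ℂ (Fin N))
    (A : EuclideanSpace ℂ (Fin N) →L[ℂ] EuclideanSpace ℂ (Fin N))
    (lam α : ℝ) (y h : ℝ → EuclideanSpace ℂ (Fin N)) : ℝ :=
  Real.exp (2 * lam) *
      (∫ x in (0:ℝ)..1,
        2 * ((inner ℂ (deriv (deriv h) x + (2:ℂ) • B (deriv y x) (deriv h x) + A (deriv h x))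
              (deriv (deriv y) x + (B (deriv y x) (deriv y x) + A (deriv y x))) : ℂ)).re
          * Real.exp (-2 * lam * x))
    + 2 * α * H2inner y h

open intervalIntegral

section QuadraticRemainder

variable {V : Type*} [NormedAddCommGroup V] [InnerProductSpace ℂ V]

-- The arguments `y₁, y₂, h₁, h₂` stand for `y', y'', h', h''`.
noncomputable def residualDensity (B : V →L[ℂ] V →L[ℂ] V) (A : V →L[ℂ] V) (y₁ y₂ h₁ h₂ : V) : ℝ :=
  ‖h₂ + (2:ℂ) • B y₁ h₁ + A h₁ + B h₁ h₁‖ ^ 2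
    + 2 * (inner ℂ (B h₁ h₁) (y₂ + (B y₁ y₁ + A y₁))).re

theorem norm_add_add_sq_sub_sub (u v w : V) :
    ‖u + v + w‖ ^ 2 - ‖u‖ ^ 2 - 2 * (inner ℂ v u).re = ‖v + w‖ ^ 2 + 2 * (inner ℂ w u).re := by
  have h := norm_add_sq (𝕜 := ℂ) u (v + w)
  rw [← add_assoc] at h
  rw [h, inner_add_right, map_add, ← inner_conj_symm u v, ← inner_conj_symm u w]
  simp only [RCLike.conj_re, RCLike.re_to_complex]
  ring

theorem residualDensity_eq_remainder {B : V →L[ℂ] V →L[ℂ] V} (hB : ∀ z w, B z w = B w z)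
    (A : V →L[ℂ] V) (y₁ y₂ h₁ h₂ : V) :
    residualDensity B A y₁ y₂ h₁ h₂
      = ‖(y₂ + h₂) + (B (y₁ + h₁) (y₁ + h₁) + A (y₁ + h₁))‖ ^ 2 - ‖y₂ + (B y₁ y₁ + A y₁)‖ ^ 2
        - 2 * (inner ℂ (h₂ + (2:ℂ) • B y₁ h₁ + A h₁) (y₂ + (B y₁ y₁ + A y₁))).re := by
  have hsplit : (y₂ + h₂) + (B (y₁ + h₁) (y₁ + h₁) + A (y₁ + h₁))
      = (y₂ + (B y₁ y₁ + A y₁)) + (h₂ + (2:ℂ) • B y₁ h₁ + A h₁) + B h₁ h₁ := by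
    simp only [map_add, add_apply, two_smul, hB h₁ y₁]
    abel
  rw [hsplit, norm_add_add_sq_sub_sub, residualDensity]

@[fun_prop]
theorem Continuous.residualDensity {X : Type*} [TopologicalSpace X] (B : V →L[ℂ] V →L[ℂ] V)
    (A : V →L[ℂ] V) {y₁ y₂ h₁ h₂ : X → V} (hy₁ : Continuous y₁) (hy₂ : Continuous y₂)
    (hh₁ : Continuous h₁) (hh₂ : Continuous h₂) :
    Continuous fun x => residualDensity B A (y₁ x) (y₂ x) (h₁ x) (h₂ x) := by
  unfold _root_.residualDensity
  fun_prop

theorem norm_add_apply_add_apply_le (B : V →L[ℂ] V →L[ℂ] V) (A : V →L[ℂ] V) (y₁ y₂ : V) :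
    ‖y₂ + (B y₁ y₁ + A y₁)‖ ≤ ‖y₂‖ + ‖B‖ * ‖y₁‖ * ‖y₁‖ + ‖A‖ * ‖y₁‖ := by
  have := B.le_opNorm₂ y₁ y₁
  have := A.le_opNorm y₁
  have := norm_add_le (B y₁ y₁) (A y₁)
  linarith [norm_add_le y₂ (B y₁ y₁ + A y₁)]

theorem norm_add_two_smul_add_le (B : V →L[ℂ] V →L[ℂ] V) (A : V →L[ℂ] V) (y₁ h₁ h₂ : V) :
    ‖h₂ + (2:ℂ) • B y₁ h₁ + A h₁‖ ≤ ‖h₂‖ + (2 * ‖B‖ * ‖y₁‖ + ‖A‖) * ‖h₁‖ := by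
  have h2B : ‖(2:ℂ) • B y₁ h₁‖ ≤ 2 * (‖B‖ * ‖y₁‖ * ‖h₁‖) := by
    rw [norm_smul, Complex.norm_two]
    gcongr
    exact B.le_opNorm₂ y₁ h₁
  linarith [norm_add₃_le (a := h₂) (b := (2:ℂ) • B y₁ h₁) (c := A h₁), A.le_opNorm h₁]

theorem abs_norm_add_sq_add_two_mul_re_inner_le (v w u : V) :
    |‖v + w‖ ^ 2 + 2 * (inner ℂ w u).re| ≤ 2 * ‖v‖ ^ 2 + 2 * ‖w‖ ^ 2 + 2 * (‖w‖ * ‖u‖) := by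
  have hre : |(inner ℂ w u).re| ≤ ‖w‖ * ‖u‖ :=
    (Complex.abs_re_le_norm _).trans (norm_inner_le_norm w u)
  have hvw : ‖v + w‖ ^ 2 ≤ (‖v‖ + ‖w‖) ^ 2 := by gcongr; exact norm_add_le v w
  refine (abs_add_le _ _).trans ?_
  rw [abs_of_nonneg (sq_nonneg _), abs_mul, abs_two]
  nlinarith [sq_nonneg (‖v‖ - ‖w‖)]

theorem exists_abs_residualDensity_le (B : V →L[ℂ] V →L[ℂ] V) (A : V →L[ℂ] V) (R : ℝ) :
    ∃ C, 0 ≤ C ∧ ∀ y₁ y₂ h₁ h₂ : V, ‖y₁‖ ^ 2 ≤ 2 * R ^ 2 → ‖h₁‖ ^ 2 ≤ 2 * R ^ 2 →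
      |residualDensity B A y₁ y₂ h₁ h₂| ≤ C * (‖h₂‖ ^ 2 + ‖h₁‖ ^ 2 * (1 + ‖y₂‖ ^ 2)) := by
  set β := ‖B‖
  set γ := ‖A‖
  set K := 2 * β * R ^ 2 + γ * (1 + 2 * R ^ 2)
  refine ⟨4 + 68 * β ^ 2 * R ^ 2 + 8 * γ ^ 2 + β + 2 * β * K, by positivity, ?_⟩
  intro y₁ y₂ h₁ h₂ hy hh
  set u := y₂ + (B y₁ y₁ + A y₁)
  set v := h₂ + (2:ℂ) • B y₁ h₁ + A h₁
  set w := B h₁ h₁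
  have hu := norm_add_apply_add_apply_le B A y₁ y₂
  have hv := norm_add_two_smul_add_le B A y₁ h₁ h₂
  have hw : ‖w‖ ≤ β * ‖h₁‖ * ‖h₁‖ := B.le_opNorm₂ h₁ h₁
  have habs : |residualDensity B A y₁ y₂ h₁ h₂| ≤ 2 * ‖v‖ ^ 2 + 2 * ‖w‖ ^ 2 + 2 * (‖w‖ * ‖u‖) :=
    abs_norm_add_sq_add_two_mul_re_inner_le v w u
  have hβ : 0 ≤ β := norm_nonneg B
  have hγ : 0 ≤ γ := norm_nonneg A
  have hK : 0 ≤ K := by positivity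
  have hv2 : ‖v‖ ^ 2 ≤ 2 * ‖h₂‖ ^ 2 + (32 * β ^ 2 * R ^ 2 + 4 * γ ^ 2) * ‖h₁‖ ^ 2 := by
    have hcoef : (2 * β * ‖y₁‖ + γ) ^ 2 ≤ 16 * β ^ 2 * R ^ 2 + 2 * γ ^ 2 := by
      nlinarith [sq_nonneg (2 * β * ‖y₁‖ - γ), mul_le_mul_of_nonneg_left hy (sq_nonneg β)]
    have : ‖v‖ ^ 2 ≤ (‖h₂‖ + (2 * β * ‖y₁‖ + γ) * ‖h₁‖) ^ 2 := by gcongr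
    nlinarith [sq_nonneg (‖h₂‖ - (2 * β * ‖y₁‖ + γ) * ‖h₁‖),
      mul_le_mul_of_nonneg_right hcoef (sq_nonneg ‖h₁‖)]
  have hw2 : ‖w‖ ^ 2 ≤ 2 * β ^ 2 * R ^ 2 * ‖h₁‖ ^ 2 := by
    have : ‖w‖ ^ 2 ≤ (β * ‖h₁‖ * ‖h₁‖) ^ 2 := by gcongr
    nlinarith [mul_le_mul_of_nonneg_left hh (mul_nonneg (sq_nonneg β) (sq_nonneg ‖h₁‖))]
  have hwu : 2 * (‖w‖ * ‖u‖) ≤ β * ‖h₁‖ ^ 2 * (1 + ‖y₂‖ ^ 2) + 2 * β * K * ‖h₁‖ ^ 2 := by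
    have hu' : ‖u‖ ≤ ‖y₂‖ + K := by
      nlinarith [sq_nonneg (‖y₁‖ - 1), mul_le_mul_of_nonneg_left hy hβ, norm_nonneg y₁]
    have : ‖w‖ * ‖u‖ ≤ β * ‖h₁‖ * ‖h₁‖ * (‖y₂‖ + K) :=
      mul_le_mul hw hu' (norm_nonneg u) (by positivity)
    nlinarith [sq_nonneg (‖y₂‖ - 1), mul_nonneg hβ (sq_nonneg ‖h₁‖)]
  have hb : ‖h₁‖ ^ 2 ≤ ‖h₁‖ ^ 2 * (1 + ‖y₂‖ ^ 2) := by nlinarith [sq_nonneg ‖h₁‖, sq_nonneg ‖y₂‖]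
  have hC : (0:ℝ) ≤ 68 * β ^ 2 * R ^ 2 + 8 * γ ^ 2 + 2 * β * K := by positivity
  nlinarith [mul_le_mul_of_nonneg_left hb hC, mul_nonneg (add_nonneg hC hβ) (sq_nonneg ‖h₂‖)]

end QuadraticRemainder

section SecondDerivative

variable {F : Type*} [NormedAddCommGroup F] [NormedSpace ℝ F]

theorem ContDiff.continuous_deriv_deriv {f : ℝ → F} (hf : ContDiff ℝ 2 f) :
    Continuous (deriv (deriv f)) :=
  (hf.deriv' (n := 1)).continuous_deriv le_rfl

theorem deriv_add_of_differentiable {f g : ℝ → F} (hf : Differentiable ℝ f)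
    (hg : Differentiable ℝ g) : deriv (f + g) = deriv f + deriv g :=
  funext fun x => deriv_add (hf x) (hg x)

theorem deriv_deriv_add_of_contDiff {f g : ℝ → F} (hf : ContDiff ℝ 2 f) (hg : ContDiff ℝ 2 g) :
    deriv (deriv (f + g)) = deriv (deriv f) + deriv (deriv g) := by
  rw [deriv_add_of_differentiable (hf.differentiable two_ne_zero) (hg.differentiable two_ne_zero),
    deriv_add_of_differentiable ((hf.deriv' (n := 1)).differentiable one_ne_zero)
      ((hg.deriv' (n := 1)).differentiable one_ne_zero)]

end SecondDerivative

theorem exists_mem_Icc_le_integral {g : ℝ → ℝ} (hg : Continuous g) :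
    ∃ t ∈ Set.Icc (0:ℝ) 1, g t ≤ ∫ s in (0:ℝ)..1, g s := by
  obtain ⟨t, ht, hle⟩ := exists_le_setAverage (μ := volume) (s := Set.Icc (0:ℝ) 1) (by simp)
    (by simp) hg.integrableOn_Icc
  refine ⟨t, ht, hle.trans_eq ?_⟩
  rw [setAverage_eq, integral_of_le zero_le_one, integral_Icc_eq_integral_Ioc]
  simp

theorem abs_integral_le_integral_abs_of_mem_Icc {g : ℝ → ℝ} (hg : Continuous g) {a b : ℝ}
    (ha : a ∈ Set.Icc (0:ℝ) 1) (hb : b ∈ Set.Icc (0:ℝ) 1) :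
    |∫ s in a..b, g s| ≤ ∫ s in (0:ℝ)..1, |g s| := by
  have hsub : Set.uIoc a b ⊆ Set.Ioc 0 1 := fun s hs =>
    ⟨(le_min ha.1 hb.1).trans_lt hs.1, hs.2.trans (max_le ha.2 hb.2)⟩
  rw [integral_of_le zero_le_one]
  exact norm_integral_le_integral_norm_uIoc.trans (setIntegral_mono_set
    hg.norm.integrableOn_Ioc (ae_of_all _ fun _ => norm_nonneg _) (ae_of_all _ hsub))

theorem sq_norm_le_two_mul_integral {F : Type*} [NormedAddCommGroup F] [InnerProductSpace ℝ F]
    {f : ℝ → F} (hf : ContDiff ℝ 1 f) {x : ℝ} (hx : x ∈ Set.Icc (0:ℝ) 1) :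
    ‖f x‖ ^ 2 ≤ 2 * ∫ s in (0:ℝ)..1, (‖f s‖ ^ 2 + ‖deriv f s‖ ^ 2) := by
  set g : ℝ → ℝ := fun s => 2 * inner ℝ (f s) (deriv f s)
  have hf' : Continuous (deriv f) := hf.continuous_deriv le_rfl
  have hgc : Continuous g := by fun_prop
  have hg_le : ∀ s, |g s| ≤ ‖f s‖ ^ 2 + ‖deriv f s‖ ^ 2 := fun s => by
    rw [abs_mul, abs_two]
    nlinarith [abs_real_inner_le_norm (f s) (deriv f s), two_mul_le_add_sq ‖f s‖ ‖deriv f s‖]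
  obtain ⟨t, ht, hft⟩ := exists_mem_Icc_le_integral (g := fun s => ‖f s‖ ^ 2) (by fun_prop)
  have hftc : ∫ s in t..x, g s = ‖f x‖ ^ 2 - ‖f t‖ ^ 2 :=
    integral_eq_sub_of_hasDerivAt (fun s _ => (hf.differentiable one_ne_zero s).hasDerivAt.norm_sq)
      (hgc.intervalIntegrable _ _)
  have hF : Continuous fun s => ‖f s‖ ^ 2 + ‖deriv f s‖ ^ 2 := by fun_prop
  have hfF : ∫ s in (0:ℝ)..1, ‖f s‖ ^ 2 ≤ ∫ s in (0:ℝ)..1, (‖f s‖ ^ 2 + ‖deriv f s‖ ^ 2) :=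
    integral_mono_on zero_le_one (Continuous.intervalIntegrable (by fun_prop) _ _)
      (hF.intervalIntegrable _ _) fun s _ => le_add_of_nonneg_right (sq_nonneg _)
  have hgF : ∫ s in (0:ℝ)..1, |g s| ≤ ∫ s in (0:ℝ)..1, (‖f s‖ ^ 2 + ‖deriv f s‖ ^ 2) :=
    integral_mono_on zero_le_one (hgc.abs.intervalIntegrable _ _) (hF.intervalIntegrable _ _)
      fun s _ => hg_le s
  have := (le_abs_self _).trans (abs_integral_le_integral_abs_of_mem_Icc hgc ht hx)
  linarith

section H2

variable {N : ℕ}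

local notation "E" => EuclideanSpace ℂ (Fin N)

theorem H2norm_sq (g : ℝ → E) :
    H2norm g ^ 2 = ∫ x in (0:ℝ)..1, (‖g x‖ ^ 2 + ‖deriv g x‖ ^ 2 + ‖deriv (deriv g) x‖ ^ 2) :=
  Real.sq_sqrt (integral_nonneg zero_le_one fun _ _ => by positivity)

theorem sq_norm_deriv_le_two_mul_H2norm_sq {g : ℝ → E} (hg : ContDiff ℝ 2 g) {x : ℝ}
    (hx : x ∈ Set.Icc (0:ℝ) 1) : ‖deriv g x‖ ^ 2 ≤ 2 * H2norm g ^ 2 := by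
  let := InnerProductSpace.complexToReal (G := E)
  have hg' : ContDiff ℝ 1 (deriv g) := hg.deriv' (n := 1)
  have := hg.continuous
  have := hg'.continuous
  have := hg.continuous_deriv_deriv
  refine (sq_norm_le_two_mul_integral hg' hx).trans ?_
  rw [H2norm_sq]
  gcongr
  refine integral_mono_on zero_le_one (Continuous.intervalIntegrable (by fun_prop) _ _)
    (Continuous.intervalIntegrable (by fun_prop) _ _) fun t _ => ?_
  nlinarith [sq_nonneg ‖g t‖]

theorem H2norm_add_sq {y h : ℝ → E} (hy : ContDiff ℝ 2 y) (hh : ContDiff ℝ 2 h) :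
    H2norm (y + h) ^ 2 = H2norm y ^ 2 + 2 * H2inner y h + H2norm h ^ 2 := by
  have := hy.continuous
  have := hh.continuous
  have := hy.continuous_deriv one_le_two
  have := hh.continuous_deriv one_le_two
  have := hy.continuous_deriv_deriv
  have := hh.continuous_deriv_deriv
  rw [H2norm_sq, H2norm_sq, H2norm_sq, H2inner, ← intervalIntegral.integral_const_mul,
    ← integral_add (Continuous.intervalIntegrable (by fun_prop) _ _)
      (Continuous.intervalIntegrable (by fun_prop) _ _),
    ← integral_add (Continuous.intervalIntegrable (by fun_prop) _ _)
      (Continuous.intervalIntegrable (by fun_prop) _ _),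
    deriv_deriv_add_of_contDiff hy hh,
    deriv_add_of_differentiable (hy.differentiable two_ne_zero) (hh.differentiable two_ne_zero)]
  refine integral_congr fun x _ => ?_
  simp only [Pi.add_apply, norm_add_sq (𝕜 := ℂ), RCLike.re_to_complex]
  ring

theorem Jfun_add_sub_sub_Lfun {B : E →L[ℂ] E →L[ℂ] E} (hB : ∀ z w, B z w = B w z)
    (A : E →L[ℂ] E) (lam α : ℝ) {y h : ℝ → E} (hy : ContDiff ℝ 2 y) (hh : ContDiff ℝ 2 h) :
    Jfun (fun z => B z z + A z) lam α (y + h) - Jfun (fun z => B z z + A z) lam α y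
        - Lfun B A lam α y h
      = Real.exp (2 * lam) * (∫ x in (0:ℝ)..1, residualDensity B A (deriv y x) (deriv (deriv y) x)
            (deriv h x) (deriv (deriv h) x) * Real.exp (-2 * lam * x))
        + α * H2norm h ^ 2 := by
  have := hy.continuous_deriv one_le_two
  have := hh.continuous_deriv one_le_two
  have := hy.continuous_deriv_deriv
  have := hh.continuous_deriv_deriv
  rw [Jfun, Jfun, Lfun, H2norm_add_sq hy hh, deriv_deriv_add_of_contDiff hy hh,
    deriv_add_of_differentiable (hy.differentiable two_ne_zero) (hh.differentiable two_ne_zero)]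
  simp only [Pi.add_apply, residualDensity_eq_remainder hB, sub_mul]
  rw [intervalIntegral.integral_sub, intervalIntegral.integral_sub]
  · ring
  all_goals exact Continuous.intervalIntegrable (by fun_prop) _ _

theorem integral_sq_deriv_deriv_add_mul_le {y h : ℝ → E} (hy : ContDiff ℝ 2 y)
    (hh : ContDiff ℝ 2 h) :
    ∫ x in (0:ℝ)..1, (‖deriv (deriv h) x‖ ^ 2 + ‖deriv h x‖ ^ 2 * (1 + ‖deriv (deriv y) x‖ ^ 2))
      ≤ (1 + 2 * H2norm y ^ 2) * H2norm h ^ 2 := by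
  have := hy.continuous
  have := hh.continuous
  have := hy.continuous_deriv one_le_two
  have := hh.continuous_deriv one_le_two
  have := hy.continuous_deriv_deriv
  have := hh.continuous_deriv_deriv
  calc _ ≤ ∫ x in (0:ℝ)..1, ((‖h x‖ ^ 2 + ‖deriv h x‖ ^ 2 + ‖deriv (deriv h) x‖ ^ 2)
          + 2 * H2norm h ^ 2 * (‖y x‖ ^ 2 + ‖deriv y x‖ ^ 2 + ‖deriv (deriv y) x‖ ^ 2)) := by
        refine integral_mono_on zero_le_one (Continuous.intervalIntegrable (by fun_prop) _ _)
          (Continuous.intervalIntegrable (by fun_prop) _ _) fun x hx => ?_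
        have hb := mul_le_mul_of_nonneg_right (sq_norm_deriv_le_two_mul_H2norm_sq hh hx)
          (sq_nonneg ‖deriv (deriv y) x‖)
        nlinarith [sq_nonneg ‖h x‖, sq_nonneg ‖y x‖, sq_nonneg ‖deriv y x‖, sq_nonneg (H2norm h)]
    _ = (1 + 2 * H2norm y ^ 2) * H2norm h ^ 2 := by
        rw [integral_add (Continuous.intervalIntegrable (by fun_prop) _ _)
          (Continuous.intervalIntegrable (by fun_prop) _ _), intervalIntegral.integral_const_mul,
          ← H2norm_sq, ← H2norm_sq]
        ring

theorem exists_abs_integral_residualDensity_le (B : E →L[ℂ] E →L[ℂ] E) (A : E →L[ℂ] E) (R : ℝ) :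
    ∃ C, 0 ≤ C ∧ ∀ lam : ℝ, 0 ≤ lam → ∀ y h : ℝ → E, ContDiff ℝ 2 y → ContDiff ℝ 2 h →
      H2norm y ≤ R → H2norm h ≤ R →
      |∫ x in (0:ℝ)..1, residualDensity B A (deriv y x) (deriv (deriv y) x) (deriv h x)
          (deriv (deriv h) x) * Real.exp (-2 * lam * x)| ≤ C * H2norm h ^ 2 := by
  obtain ⟨C, hC, hbound⟩ := exists_abs_residualDensity_le B A R
  refine ⟨C * (1 + 2 * R ^ 2), by positivity, fun lam hlam y h hy hh hyR hhR => ?_⟩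
  have := hy.continuous_deriv one_le_two
  have := hh.continuous_deriv one_le_two
  have := hy.continuous_deriv_deriv
  have := hh.continuous_deriv_deriv
  have hyR2 : H2norm y ^ 2 ≤ R ^ 2 := pow_le_pow_left₀ (Real.sqrt_nonneg _) hyR 2
  have hhR2 : H2norm h ^ 2 ≤ R ^ 2 := pow_le_pow_left₀ (Real.sqrt_nonneg _) hhR 2
  calc _ ≤ ∫ x in (0:ℝ)..1, C * (‖deriv (deriv h) x‖ ^ 2
          + ‖deriv h x‖ ^ 2 * (1 + ‖deriv (deriv y) x‖ ^ 2)) := by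
        refine (abs_integral_le_integral_abs zero_le_one).trans (integral_mono_on zero_le_one
          (Continuous.intervalIntegrable (by fun_prop) _ _)
          (Continuous.intervalIntegrable (by fun_prop) _ _) fun x hx => ?_)
        have hweight : Real.exp (-2 * lam * x) ≤ 1 := Real.exp_le_one_iff.2 (by nlinarith [hx.1])
        rw [abs_mul, abs_of_pos (Real.exp_pos _)]
        refine (mul_le_of_le_one_right (abs_nonneg _) hweight).trans (hbound _ _ _ _ ?_ ?_)
        · linarith [sq_norm_deriv_le_two_mul_H2norm_sq hy hx]
        · linarith [sq_norm_deriv_le_two_mul_H2norm_sq hh hx]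
    _ ≤ C * ((1 + 2 * H2norm y ^ 2) * H2norm h ^ 2) := by
        rw [intervalIntegral.integral_const_mul]
        exact mul_le_mul_of_nonneg_left (integral_sq_deriv_deriv_add_mul_le hy hh) hC
    _ ≤ C * (1 + 2 * R ^ 2) * H2norm h ^ 2 := by
        rw [← mul_assoc]
        gcongr

end H2

theorem frechet_differentiability_of_weighted_functional {N : ℕ}
    (B : EuclideanSpace ℂ (Fin N) →L[ℂ] EuclideanSpace ℂ (Fin N) →L[ℂ] EuclideanSpace ℂ (Fin N))
    (hBsymm : ∀ z w, B z w = B w z)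
    (A : EuclideanSpace ℂ (Fin N) →L[ℂ] EuclideanSpace ℂ (Fin N))
    (R : ℝ) :
    ∃ C₁ : ℝ, 0 < C₁ ∧
      ∀ lam : ℝ, 1 ≤ lam → ∀ α ∈ Set.Icc (0:ℝ) 1,
        ∀ y h : ℝ → EuclideanSpace ℂ (Fin N),
          ContDiff ℝ 2 y → ContDiff ℝ 2 h →
          H2norm y ≤ R → H2norm h ≤ R →
          |Jfun (fun z => B z z + A z) lam α (y + h)
              - Jfun (fun z => B z z + A z) lam α y
              - Lfun B A lam α y h|
            ≤ C₁ * Real.exp (2 * lam) * (H2norm h) ^ 2 := by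
  obtain ⟨C, hC, hbound⟩ := exists_abs_integral_residualDensity_le B A R
  refine ⟨C + 1, by positivity, fun lam hlam α hα y h hy hh hyR hhR => ?_⟩
  have hI := hbound lam (by linarith) y h hy hh hyR hhR
  have hexp : 1 ≤ Real.exp (2 * lam) := Real.one_le_exp (by linarith)
  have hα_le : α * H2norm h ^ 2 ≤ Real.exp (2 * lam) * H2norm h ^ 2 :=
    mul_le_mul_of_nonneg_right (hα.2.trans hexp) (sq_nonneg _)
  rw [Jfun_add_sub_sub_Lfun hBsymm A lam α hy hh]
  calc _ ≤ Real.exp (2 * lam) * |∫ x in (0:ℝ)..1, residualDensity B A (deriv y x)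
          (deriv (deriv y) x) (deriv h x) (deriv (deriv h) x) * Real.exp (-2 * lam * x)|
        + α * H2norm h ^ 2 := by
        refine (abs_add_le _ _).trans_eq ?_
        rw [abs_mul, abs_of_pos (Real.exp_pos _), abs_of_nonneg (mul_nonneg hα.1 (sq_nonneg _))]
    _ ≤ (C + 1) * Real.exp (2 * lam) * H2norm h ^ 2 := by
        nlinarith [mul_le_mul_of_nonneg_left hI (Real.exp_pos (2 * lam)).le]
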